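/- Let H be a finite index subgroup of F_n, let w ∈ F_n be a visible element, and let m be the smallest positive integer with w^m ∈ H. If the cyclic group ⟨w⟩ acts transitively on the right cosets of H in F_n, then w^m is a visible element of the free group H. -/

import Mathlib

/-- `R` is a retract of the ambient group: there is an endomorphism with image `R`
restricting to the identity on `R` (equivalently, an idempotent endomorphism with image `R`). -/
def IsRetract {G : Type*} [Group G] (R : Subgroup G) : Prop :=
  ∃ r : G →* G, r.range = R ∧ ∀ x ∈ R, r x = x

/-- The subgroup `H` is free of rank `m`. -/
def HasFreeRank {G : Type*} [Group G] (H : Subgroup G) (m : ℕ) : Prop :=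
  ∃ φ : FreeGroup (Fin m) →* G, Function.Injective φ ∧ φ.range = H

/-- An element of a (finitely generated free or free abelian) group is *visible* if some
homomorphism to `ℤ` sends it to `1`; equivalently, its image in the abelianization is part
of a basis (has coprime coordinates). -/
def IsVisibleElement {G : Type*} [Group G] (g : G) : Prop :=
  ∃ f : G →* Multiplicative ℤ, f g = Multiplicative.ofAdd 1

/-!
By Shapiro's lemma, homomorphisms `H → ℤ` come from crossed homomorphisms
`U : F → (F ⧸ H → ℤ)`, via `h ↦ U h (H)`; since `F` is free, `U` can be prescribed freely on the
generators. Take `U a = f a · δ_H`, where `f : F → ℤ` sends `w` to `1`. Summing `U g` over all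
cosets is a homomorphism `F → ℤ` that agrees with `f` on generators, hence equals `f`. As `⟨w⟩`
acts transitively, the cosets are `H, w⁻¹H, …, w⁻⁽ᵐ⁻¹⁾H`, each once, so the cocycle identity gives
`U (w ^ m) (H) = ∑ᵢ U w (w⁻ⁱH) = ∑_y U w y = f w = 1`.
-/

namespace FreeGroup

section Group

variable {α X A : Type*} [MulAction (FreeGroup α) X] [Group A]

/-- `g ↦ (cocycle c g, g)` is the homomorphism to the semidirect product sending `of a` to
`(c a, of a)`, so `cocycle c` is the crossed homomorphism with values `c` on the generators. -/
def toSemidirect (c : α → X → A) : FreeGroup α →* (X → A) ⋊[mulAutArrow] FreeGroup α :=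
  lift fun a => ⟨c a, of a⟩

def cocycle (c : α → X → A) (g : FreeGroup α) : X → A :=
  (toSemidirect c g).left

variable (c : α → X → A)

@[simp]
theorem toSemidirect_right (g : FreeGroup α) : (toSemidirect c g).right = g := by
  have : SemidirectProduct.rightHom.comp (toSemidirect c) = MonoidHom.id _ :=
    ext_hom _ _ fun a => by simp [toSemidirect]
  exact DFunLike.congr_fun this g

@[simp]
theorem cocycle_one : cocycle c 1 = 1 := by
  simp [cocycle]

@[simp]
theorem cocycle_of (a : α) : cocycle c (of a) = c a := by
  simp [cocycle, toSemidirect]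

theorem cocycle_mul (g h : FreeGroup α) (x : X) :
    cocycle c (g * h) x = cocycle c g x * cocycle c h (g⁻¹ • x) := by
  simp only [cocycle, _root_.map_mul, SemidirectProduct.mul_left, toSemidirect_right]
  rfl

def cocycleRestrict {K : Subgroup (FreeGroup α)} {x : X}
    (hK : K ≤ MulAction.stabilizer (FreeGroup α) x) : K →* A where
  toFun g := cocycle c g x
  map_one' := by simp
  map_mul' g h := by
    rw [Subgroup.coe_mul, cocycle_mul, inv_smul_eq_iff.mpr (hK g.2).symm]

theorem cocycleRestrict_apply {K : Subgroup (FreeGroup α)} {x : X}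
    (hK : K ≤ MulAction.stabilizer (FreeGroup α) x) (g : K) :
    cocycleRestrict c hK g = cocycle c g x :=
  rfl

end Group

section CommGroup

variable {α X A : Type*} [MulAction (FreeGroup α) X] [CommGroup A] (c : α → X → A)

theorem cocycle_pow (g : FreeGroup α) (k : ℕ) (x : X) :
    cocycle c (g ^ k) x = ∏ i ∈ Finset.range k, cocycle c g (g⁻¹ ^ i • x) := by
  induction k with
  | zero => simp
  | succ k ih => rw [pow_succ, cocycle_mul, ih, Finset.prod_range_succ, inv_pow]

theorem cocycle_pow_eq_prod_univ [Fintype X] {g : FreeGroup α} {k : ℕ} {x : X}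
    (hbij : Function.Bijective fun i : Fin k => g⁻¹ ^ (i : ℕ) • x) :
    cocycle c (g ^ k) x = ∏ y, cocycle c g y := by
  rw [cocycle_pow, ← Fin.prod_univ_eq_prod_range]
  exact Fintype.prod_bijective _ hbij _ _ fun _ => rfl

theorem prod_cocycle [Fintype X] (g : FreeGroup α) :
    ∏ x, cocycle c g x = lift (fun a => ∏ x, c a x) g := by
  let S : FreeGroup α →* A := MonoidHom.mk' (fun g => ∏ x, cocycle c g x) fun g h => by
    simp only [cocycle_mul, Finset.prod_mul_distrib]
    rw [Fintype.prod_equiv (MulAction.toPerm g⁻¹) (fun x => cocycle c h (g⁻¹ • x))]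
    intro; rfl
  exact DFunLike.congr_fun (ext_hom S (lift _) fun a => by simp [S]) g

end CommGroup

end FreeGroup

theorem MulAction.bijective_pow_smul_of_period {G X : Type*} [Group G] [MulAction G X]
    {g : G} {x : X} (hpos : 0 < period g x) (horbit : ∀ y : X, ∃ k : ℤ, g ^ k • x = y) :
    Function.Bijective fun i : Fin (period g x) => g ^ (i : ℕ) • x := by
  refine ⟨fun i j hij => Fin.ext ?_, fun y => ?_⟩
  · simp only [← smul_iterate_apply, period_eq_minimalPeriod] at hij
    exact Function.iterate_injOn_Iio_minimalPeriod i.2 j.2 hij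
  · obtain ⟨k, rfl⟩ := horbit y
    have hmod : 0 ≤ k % (period g x : ℤ) := Int.emod_nonneg _ (by omega)
    have hlt : k % (period g x : ℤ) < period g x := Int.emod_lt_of_pos _ (by omega)
    refine ⟨⟨(k % period g x).toNat, by omega⟩, ?_⟩
    dsimp only
    rw [← zpow_mod_period_smul k, ← zpow_natCast, Int.toNat_of_nonneg hmod]

theorem QuotientGroup.bijective_inv_pow_smul_one {G : Type*} [Group G] {H : Subgroup G} {w : G}
    (htrans : ∀ g : G, ∃ k : ℤ, g * w ^ k ∈ H) {m : ℕ} (hm : 0 < m) (hwm : w ^ m ∈ H)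
    (hmin : ∀ j : ℕ, 0 < j → w ^ j ∈ H → m ≤ j) :
    Function.Bijective fun i : Fin m => w⁻¹ ^ (i : ℕ) • ((1 : G) : G ⧸ H) := by
  have hfix (g : G) : g • ((1 : G) : G ⧸ H) = (1 : G) ↔ g ∈ H := by
    rw [← MulAction.mem_stabilizer_iff, MulAction.stabilizer_quotient]
  have hperiod : MulAction.period w⁻¹ ((1 : G) : G ⧸ H) = m := by
    rw [MulAction.period_inv]
    refine le_antisymm (MulAction.period_le_of_fixed hm ((hfix _).2 hwm)) ?_
    exact MulAction.le_period (MulAction.period_pos_of_fixed hm ((hfix _).2 hwm))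
      fun k hk hkm hfixk => absurd (hmin k hk ((hfix _).1 hfixk)) (by omega)
  have horbit (y : G ⧸ H) : ∃ k : ℤ, w⁻¹ ^ k • ((1 : G) : G ⧸ H) = y := by
    obtain ⟨g, rfl⟩ := mk_surjective y
    obtain ⟨k, hk⟩ := htrans g⁻¹
    refine ⟨-k, ?_⟩
    rw [inv_zpow', neg_neg, MulAction.Quotient.smul_mk, smul_eq_mul, mul_one, QuotientGroup.eq]
    simpa using H.inv_mem hk
  have hbij := MulAction.bijective_pow_smul_of_period (by omega) horbit
  rwa [hperiod] at hbij

theorem visible_power_of_transitive_general {n : ℕ}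
    (H : Subgroup (FreeGroup (Fin n)))
    (w : FreeGroup (Fin n)) (hw : IsVisibleElement w)
    (htrans : ∀ g : FreeGroup (Fin n), ∃ k : ℤ, g * w ^ k ∈ H)
    (m : ℕ) (hm : 0 < m) (hwm : w ^ m ∈ H)
    (hmin : ∀ j : ℕ, 0 < j → w ^ j ∈ H → m ≤ j) :
    IsVisibleElement (⟨w ^ m, hwm⟩ : H) := by
  classical
  obtain ⟨f, hf⟩ := hw
  have hbij := QuotientGroup.bijective_inv_pow_smul_one htrans hm hwm hmin
  have : Fintype (FreeGroup (Fin n) ⧸ H) := Fintype.ofBijective _ hbij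
  let c (a : Fin n) : FreeGroup (Fin n) ⧸ H → Multiplicative ℤ :=
    Pi.mulSingle ((1 : FreeGroup (Fin n)) : FreeGroup (Fin n) ⧸ H) (f (FreeGroup.of a))
  refine ⟨FreeGroup.cocycleRestrict c (MulAction.stabilizer_quotient H).ge, ?_⟩
  calc FreeGroup.cocycleRestrict c _ ⟨w ^ m, hwm⟩
      = ∏ y, FreeGroup.cocycle c w y := by
        rw [FreeGroup.cocycleRestrict_apply, FreeGroup.cocycle_pow_eq_prod_univ c hbij]
    _ = f w := by
        rw [FreeGroup.prod_cocycle]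
        congr 1
        exact FreeGroup.ext_hom _ _ fun a => by simp [c]
    _ = Multiplicative.ofAdd 1 := hf

theorem visible_power_of_transitive {n : ℕ} (hn : 2 ≤ n)
    (H : Subgroup (FreeGroup (Fin n))) [H.FiniteIndex]
    (w : FreeGroup (Fin n)) (hw : IsVisibleElement w)
    (htrans : ∀ g : FreeGroup (Fin n), ∃ k : ℤ, g * w ^ k ∈ H)
    (m : ℕ) (hm : 0 < m) (hwm : w ^ m ∈ H)
    (hmin : ∀ j : ℕ, 0 < j → w ^ j ∈ H → m ≤ j) :
    IsVisibleElement (⟨w ^ m, hwm⟩ : H) :=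
  visible_power_of_transitive_general H w hw htrans m hm hwm hmin
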